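/- Completeness of the multinomial family: Let d ≥ 1, n ≥ 0, and let N be the set of d-tuples of nonnegative integers summing to n. Suppose g : N → ℝ satisfies Σ_{(n₁,...,n_d) ∈ N} g(n₁,...,n_d) · n!/(n₁!···n_d!) · p₁^{n₁}···p_d^{n_d} = 0 for all probability vectors (p₁,...,p_d) with all entries strictly positive. Then g is identically zero on N. -/

import Mathlib

/-!
Clearing the normalisation: for positive `x` with `s = ∑ x`, every monomial of total degree `n`
satisfies `∏ x^v = s^n ∏ (x/s)^v`, so the hypothesis makes the polynomial
`∑ g v · multinomial v · X^v` vanish on the whole open positive orthant. A polynomial over `ℝ`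
vanishing on a product of infinite sets is zero, so all its coefficients vanish, and the
multinomial coefficients are positive.
-/

open Finset MvPolynomial

section Homogeneity

variable {ι α : Type*} [Fintype ι]

theorem prod_div_pow_of_sum_eq [DivisionCommMonoid α] (x : ι → α) (s : α) {v : ι → ℕ} {n : ℕ}
    (hv : ∑ i, v i = n) : ∏ i, (x i / s) ^ v i = (∏ i, x i ^ v i) / s ^ n := by
  simp_rw [div_pow]
  rw [prod_div_distrib, prod_pow_eq_pow_sum, hv]

theorem sum_mul_prod_pow_eq_zero_of_eq_zero_on_simplex [Nonempty ι] {n : ℕ}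
    (S : Finset (ι → ℕ)) (hS : ∀ v ∈ S, ∑ i, v i = n) (c : (ι → ℕ) → ℝ)
    (h : ∀ p : ι → ℝ, (∀ i, 0 < p i) → ∑ i, p i = 1 → ∑ v ∈ S, c v * ∏ i, p i ^ v i = 0)
    (x : ι → ℝ) (hx : ∀ i, 0 < x i) : ∑ v ∈ S, c v * ∏ i, x i ^ v i = 0 := by
  set s := ∑ i, x i
  have hs : 0 < s := sum_pos (fun i _ => hx i) univ_nonempty
  have hnormalized : ∑ v ∈ S, c v * ∏ i, (x i / s) ^ v i = 0 :=
    h _ (fun i => div_pos (hx i) hs) (by rw [← sum_div, div_self hs.ne'])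
  have hscale : ∀ v ∈ S, c v * ∏ i, x i ^ v i = s ^ n * (c v * ∏ i, (x i / s) ^ v i) := by
    intro v hv
    rw [prod_div_pow_of_sum_eq x s (hS v hv)]
    field_simp
  rw [sum_congr rfl hscale, ← mul_sum, hnormalized, mul_zero]

end Homogeneity

section Polynomial

variable {σ R : Type*} [Fintype σ] [CommRing R]

theorem eval_sum_monomial_equivFunOnFinite (S : Finset (σ → ℕ)) (c : (σ → ℕ) → R) (x : σ → R) :
    eval x (∑ v ∈ S, monomial (Finsupp.equivFunOnFinite.symm v) (c v)) =
      ∑ v ∈ S, c v * ∏ i, x i ^ v i := by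
  rw [map_sum]
  refine sum_congr rfl fun v _ => ?_
  rw [eval_monomial, Finsupp.prod_fintype _ _ (fun i => pow_zero _)]
  rfl

theorem coeff_sum_monomial_equivFunOnFinite (S : Finset (σ → ℕ)) (c : (σ → ℕ) → R)
    {v : σ → ℕ} (hv : v ∈ S) :
    coeff (Finsupp.equivFunOnFinite.symm v)
      (∑ w ∈ S, monomial (Finsupp.equivFunOnFinite.symm w) (c w)) = c v := by
  classical
  rw [coeff_sum, sum_eq_single_of_mem v hv, coeff_monomial, if_pos rfl]
  intro w _ hwv
  rw [coeff_monomial, if_neg (fun hw => hwv (Finsupp.equivFunOnFinite.symm.injective hw))]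

theorem eq_zero_of_sum_mul_prod_pow_eq_zero_on_pi [IsDomain R] (s : σ → Set R)
    (hs : ∀ i, (s i).Infinite) (S : Finset (σ → ℕ)) (c : (σ → ℕ) → R)
    (h : ∀ x ∈ Set.univ.pi s, ∑ v ∈ S, c v * ∏ i, x i ^ v i = 0) :
    ∀ v ∈ S, c v = 0 := by
  have hF : ∑ v ∈ S, monomial (Finsupp.equivFunOnFinite.symm v) (c v) = 0 :=
    funext_set s hs fun x hx => by
    rw [eval_sum_monomial_equivFunOnFinite, h x hx, map_zero]
  intro v hv
  rw [← coeff_sum_monomial_equivFunOnFinite S c hv, hF, coeff_zero]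

end Polynomial

theorem multinomial_complete (d n : ℕ) (hd : 1 ≤ d) (g : (Fin d → ℕ) → ℝ)
    (h : ∀ p : Fin d → ℝ, (∀ ℓ, 0 < p ℓ) → (∑ ℓ, p ℓ) = 1 →
      ∑ v ∈ Finset.Nat.antidiagonalTuple d n,
        g v * (Nat.multinomial Finset.univ v : ℝ) * ∏ ℓ, p ℓ ^ v ℓ = 0) :
    ∀ v ∈ Finset.Nat.antidiagonalTuple d n, g v = 0 := by
  have : Nonempty (Fin d) := Fin.pos_iff_nonempty.mp hd
  have hdegree : ∀ v ∈ Finset.Nat.antidiagonalTuple d n, ∑ ℓ, v ℓ = n := fun v hv =>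
    Finset.Nat.mem_antidiagonalTuple.mp hv
  have hcoeff := eq_zero_of_sum_mul_prod_pow_eq_zero_on_pi (fun _ => Set.Ioi 0)
    (fun _ => Set.Ioi_infinite 0) _ _ fun x hx =>
      sum_mul_prod_pow_eq_zero_of_eq_zero_on_simplex _ hdegree _ h x fun i => hx i (Set.mem_univ i)
  intro v hv
  have hmultinomial : (Nat.multinomial univ v : ℝ) ≠ 0 := by
    exact_mod_cast (Nat.multinomial_pos _ _).ne'
  exact (mul_eq_zero.mp (hcoeff v hv)).resolve_right hmultinomial
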